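/- Let M be a commutative monoid. If the simplicial set K(M,2) satisfies the Kan condition Kan_0[3] (every horn Λ_0[3] → K(M,2) extends to Δ[3]), then every element of M is invertible, i.e., M is an abelian group. In particular, if K(M,2) is a Kan complex then M is a group. -/

import Mathlib

open CategoryTheory Simplicial

/-- The Kan condition `Kan_p[1]` in dimension 1. -/
def KanCondition1 (S : SSet) (p : Fin 2) : Prop :=
  ∀ c : (i : Fin 2) → i ≠ p → S _⦋0⦌,
    ∃ x : S _⦋1⦌, ∀ (i : Fin 2) (hi : i ≠ p), S.δ i x = c i hi

/-- The Kan condition `Kan_p[k+2]` in dimensions `≥ 2`. -/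
def KanCondition (S : SSet) (k : ℕ) (p : Fin (k + 3)) : Prop :=
  ∀ c : (i : Fin (k + 3)) → i ≠ p → S _⦋k + 1⦌,
    (∀ (i j : Fin (k + 3)) (hij : i < j) (hi : i ≠ p) (hj : j ≠ p),
      S.δ (⟨i.1, by have h1 : i.1 < j.1 := hij; have h2 := j.isLt; omega⟩ : Fin (k + 2)) (c j hj) =
      S.δ (⟨j.1 - 1, by have h2 := j.isLt; omega⟩ : Fin (k + 2)) (c i hi)) →
    ∃ x : S _⦋k + 2⦌, ∀ (i : Fin (k + 3)) (hi : i ≠ p), S.δ i x = c i hi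

/-- The Beck–Chevalley condition `BC_{p,q}[k+2]`. -/
def BCCondition (S : SSet) (k : ℕ) (p q : Fin (k + 3)) (hpq : p < q) : Prop :=
  ∀ cp cq : S _⦋k + 1⦌,
    S.δ (⟨p.1, by have h1 : p.1 < q.1 := hpq; have h2 := q.isLt; omega⟩ : Fin (k + 2)) cq =
    S.δ (⟨q.1 - 1, by have h2 := q.isLt; omega⟩ : Fin (k + 2)) cp →
    ∃ x : S _⦋k + 2⦌, S.δ p x = cp ∧ S.δ q x = cq


open CategoryTheory Simplicial

/-- The 2-cocycle condition for a family `a = (a_{ijk})_{i<j<k}` of elements of a commutative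
monoid `M`. -/
def IsCocycle (M : Type) [CommMonoid M] {n : ℕ}
    (a : (i j k : Fin (n + 1)) → i < j → j < k → M) : Prop :=
  ∀ (i j k l : Fin (n + 1)) (hij : i < j) (hjk : j < k) (hkl : k < l),
    a i k l (hij.trans hjk) hkl * a i j k hij hjk =
      a i j l hij (hjk.trans hkl) * a j k l hjk hkl

/-- Pullback of a family of elements of `M` along a morphism of the simplex category:
`(f^* a)_{ijk} = a_{f(i) f(j) f(k)}` when `f(i) < f(j) < f(k)`, and `1` otherwise. -/
def pullFamily (M : Type) [CommMonoid M] {m n : SimplexCategory} (f : m ⟶ n)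
    (a : (i j k : Fin (n.len + 1)) → i < j → j < k → M)
    (i j k : Fin (m.len + 1)) (_ : i < j) (_ : j < k) : M :=
  if h : f.toOrderHom i < f.toOrderHom j ∧ f.toOrderHom j < f.toOrderHom k
  then a (f.toOrderHom i) (f.toOrderHom j) (f.toOrderHom k) h.1 h.2 else 1

lemma family_congr (M : Type) [CommMonoid M] {n : ℕ}
    (a : (i j k : Fin (n + 1)) → i < j → j < k → M)
    {i i' j j' k k' : Fin (n + 1)} (hi : i = i') (hj : j = j') (hk : k = k')
    {hij hjk hij' hjk'} : a i j k hij hjk = a i' j' k' hij' hjk' := by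
  subst hi; subst hj; subst hk; rfl

lemma pullFamily_isCocycle (M : Type) [CommMonoid M] {m n : SimplexCategory} (f : m ⟶ n)
    (a : (i j k : Fin (n.len + 1)) → i < j → j < k → M) (ha : IsCocycle M a) :
    IsCocycle M (pullFamily M f a) := by
  intro i j k l hij hjk hkl
  have h1 : f.toOrderHom i ≤ f.toOrderHom j := f.toOrderHom.monotone hij.le
  have h2 : f.toOrderHom j ≤ f.toOrderHom k := f.toOrderHom.monotone hjk.le
  have h3 : f.toOrderHom k ≤ f.toOrderHom l := f.toOrderHom.monotone hkl.le
  unfold pullFamily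
  split_ifs <;> first | omega | skip
  all_goals try simp only [one_mul, mul_one]
  all_goals
    first
      | rfl
      | (exact ha _ _ _ _ _ _ _)
      | (exact family_congr M a (by omega) (by omega) (by omega))

/-- The simplicial set `K(M,2)` associated to a commutative monoid `M`: its `n`-simplices are
families `(a_{ijk})_{0 ≤ i < j < k ≤ n}` of elements of `M` satisfying the cocycle condition
`a_{ikl} * a_{ijk} = a_{ijl} * a_{jkl}`. -/
def K2 (M : Type) [CommMonoid M] : SSet.{0} where
  obj n := { a : (i j k : Fin (n.unop.len + 1)) → i < j → j < k → M // IsCocycle M a }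
  map {n₁ n₂} f := TypeCat.ofHom fun a => ⟨pullFamily M f.unop a.1, pullFamily_isCocycle M f.unop a.1 a.2⟩
  map_id n := by
    refine ConcreteCategory.ext_apply fun a => ?_
    apply Subtype.ext
    funext i j k hij hjk
    show pullFamily M (𝟙 n.unop) a.1 i j k hij hjk = a.1 i j k hij hjk
    unfold pullFamily
    rw [dif_pos ⟨hij, hjk⟩]
    exact family_congr M a.1 rfl rfl rfl
  map_comp {n₁ n₂ n₃} f g := by
    refine ConcreteCategory.ext_apply fun a => ?_
    apply Subtype.ext
    funext i j k hij hjk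
    show pullFamily M (g.unop ≫ f.unop) a.1 i j k hij hjk =
      pullFamily M g.unop (pullFamily M f.unop a.1) i j k hij hjk
    have m1 : g.unop.toOrderHom i ≤ g.unop.toOrderHom j := g.unop.toOrderHom.monotone hij.le
    have m2 : g.unop.toOrderHom j ≤ g.unop.toOrderHom k := g.unop.toOrderHom.monotone hjk.le
    unfold pullFamily
    simp only [show ∀ x, (g.unop ≫ f.unop).toOrderHom x
        = f.unop.toOrderHom (g.unop.toOrderHom x) from fun _ => rfl]
    rcases lt_or_eq_of_le m1 with s1 | s1 <;> rcases lt_or_eq_of_le m2 with s2 | s2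
    · split_ifs <;> first | rfl | omega
    · have e2 : f.unop.toOrderHom (g.unop.toOrderHom j) = f.unop.toOrderHom (g.unop.toOrderHom k) :=
        congrArg _ s2
      split_ifs <;> first | rfl | omega
    · have e1 : f.unop.toOrderHom (g.unop.toOrderHom i) = f.unop.toOrderHom (g.unop.toOrderHom j) :=
        congrArg _ s1
      split_ifs <;> first | rfl | omega
    · have e1 : f.unop.toOrderHom (g.unop.toOrderHom i) = f.unop.toOrderHom (g.unop.toOrderHom j) :=
        congrArg _ s1
      have e2 : f.unop.toOrderHom (g.unop.toOrderHom j) = f.unop.toOrderHom (g.unop.toOrderHom k) :=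
        congrArg _ s2
      split_ifs <;> first | rfl | omega

/-- The Kan complex condition as Mathlib stated it in December 2024 (horn filling for all
`Λ[n, i] ⟶ S`, including `n = 0`). -/
def OldKanComplex (S : SSet) : Prop :=
  ∀ ⦃n : ℕ⦄ ⦃i : Fin (n + 1)⦄ (σ₀ : (Λ[n, i] : SSet) ⟶ S),
    ∃ σ : Δ[n] ⟶ S, σ₀ = Λ[n, i].ι ≫ σ

/-!
A 2-simplex of `K(M,2)` is a single element of `M`, and `K(M,2)` has only one 1-simplex,
so any three elements `c₁, c₂, c₃` form a horn `Λ[3,0] → K(M,2)`. Filling the horn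
`(c₁, c₂, c₃) = (1, a, 1)` by a 3-simplex `x`, the cocycle identity of `x` at `0 < 1 < 2 < 3`
reads `1 · 1 = a · x₁₂₃`, so `x₁₂₃` is an inverse of `a`. A Kan complex fills `Λ[3,0]` in
particular, since compatible faces glue to a map out of the horn.
-/

open SSet

lemma OldKanComplex.kanCondition {S : SSet} (hS : OldKanComplex S) (k : ℕ) (p : Fin (k + 3)) :
    KanCondition S k p := by
  intro c hc
  have hcompat : horn.IsCompatible (fun j hj ↦ yonedaEquiv.symm (c j hj)) := by
    rw [horn.isCompatible_iff]
    intro i j hi hj hij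
    simp only [stdSimplex.δ_comp_yonedaEquiv_symm]
    exact congrArg _ (hc i j hij hi hj).symm
  obtain ⟨φ, hφ⟩ := hcompat.exists_desc
  obtain ⟨σ, rfl⟩ := hS φ
  refine ⟨yonedaEquiv σ, fun i hi ↦ ?_⟩
  rw [← stdSimplex.yonedaEquiv_δ_comp, ← horn.ι_ι p i hi, Category.assoc, hφ,
    Equiv.apply_symm_apply]

namespace K2

variable {M : Type} [CommMonoid M]

instance : Subsingleton ((K2 M) _⦋1⦌) := by
  refine ⟨fun u v ↦ Subtype.ext ?_⟩
  funext i j k hij hjk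
  have : (k : ℕ) < 2 := k.isLt
  omega

def mk₂ (m : M) : (K2 M) _⦋2⦌ :=
  ⟨fun _ _ _ _ _ ↦ m, fun _ _ _ l _ _ _ ↦ by have : (l : ℕ) < 3 := l.isLt; omega⟩

def val₂ (σ : (K2 M) _⦋2⦌) : M :=
  σ.1 0 1 2 (by decide) (by decide)

@[simp]
lemma val₂_mk₂ (m : M) : val₂ (mk₂ m) = m := rfl

/- The faces `δ 1`, `δ 3`, `δ 2`, `δ 0` of `x` carry `x₀₂₃`, `x₀₁₂`, `x₀₁₃`, `x₁₂₃`, so this is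
the cocycle identity of `x` at `0 < 1 < 2 < 3`. -/
lemma val₂_δ_one_mul_val₂_δ_three (x : (K2 M) _⦋3⦌) :
    val₂ ((K2 M).δ 1 x) * val₂ ((K2 M).δ 3 x) = val₂ ((K2 M).δ 2 x) * val₂ ((K2 M).δ 0 x) :=
  x.2 0 1 2 3 (by decide) (by decide) (by decide)

lemma exists_mul_eq_one_of_kanCondition (h : KanCondition (K2 M) 1 0) (a : M) :
    ∃ b, a * b = 1 := by
  obtain ⟨x, hx⟩ :=
    h (fun i _ ↦ mk₂ (if i = 2 then a else 1)) fun _ _ _ _ _ ↦ Subsingleton.elim _ _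
  refine ⟨val₂ ((K2 M).δ 0 x), ?_⟩
  have hcocycle := val₂_δ_one_mul_val₂_δ_three x
  rw [hx 1 (by decide), hx 2 (by decide), hx 3 (by decide)] at hcocycle
  simpa using hcocycle.symm

end K2

/-- If `K(M,2)` satisfies the Kan condition `Kan_0[3]`, then every element of the commutative
monoid `M` is invertible, i.e. `M` is an abelian group. In particular, if `K(M,2)` is a Kan
complex then `M` is a group. -/
theorem k2_kanCondition_zero_three_implies_group (M : Type) [CommMonoid M] :
    (KanCondition (K2 M) 1 0 → ∀ a : M, ∃ b : M, a * b = 1) ∧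
    (OldKanComplex (K2 M) → ∀ a : M, ∃ b : M, a * b = 1) :=
  ⟨K2.exists_mul_eq_one_of_kanCondition,
    fun h ↦ K2.exists_mul_eq_one_of_kanCondition (h.kanCondition 1 0)⟩
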